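/- Fix C > 0. If (w*, b*, u*) is a P-stationary point with some parameter γ > 0 of the problem min (1/2)‖w‖² + C‖u_+‖₀ subject to u + Aw + b y = 1, then (w*, b*, u*) is a local minimizer of this problem; that is, there is a neighborhood N of (w*, b*, u*) such that (1/2)‖w*‖² + C‖u*_+‖₀ ≤ (1/2)‖w‖² + C‖u_+‖₀ for all (w, b, u) ∈ N satisfying u + Aw + b y = 1. -/

import Mathlib

/-!
Conditions (a)–(c) make the objective, restricted to the feasible set, equal up to an additive
constant to the separable function
`L(w, u) = ∑ⱼ (wⱼ²/2 - w*ⱼ wⱼ) + ∑ᵢ (C [uᵢ > 0] + λᵢ uᵢ)`.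
Each `wⱼ²/2 - w*ⱼ wⱼ` is minimal at `w*ⱼ`, and condition (d) leaves only two cases for an index `i`:
either `λᵢ = 0`, or `u*ᵢ = 0` and `λᵢ < 0`. In both, `v ↦ C [v > 0] + λᵢ v` has a local minimum
at `u*ᵢ`, so `L`, and hence the objective on the feasible set, has a local minimum at the point.
-/

open Finset

noncomputable def l01norm {m : ℕ} (v : Fin m → ℝ) : ℕ :=
  (Finset.univ.filter fun i => 0 < v i).card

/-- `(w, b, u)` is a P-stationary point with parameter `γ > 0` and multiplier
`lam` of the problem `min (1/2)‖w‖² + C‖u₊‖₀ s.t. u + Aw + by = 1`. -/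
def IsPStationary {m n : ℕ} (A : Matrix (Fin m) (Fin n) ℝ) (y : Fin m → ℝ)
    (C γ : ℝ) (w : Fin n → ℝ) (b : ℝ) (u : Fin m → ℝ) (lam : Fin m → ℝ) : Prop :=
  (∀ j, w j + ∑ i, A i j * lam i = 0) ∧
  (∑ i, y i * lam i = 0) ∧
  (∀ i, u i + A.mulVec w i + b * y i = 1) ∧
  (∀ i, (0 < u i - γ * lam i ∧ u i - γ * lam i ≤ Real.sqrt (2 * γ * C)) →
      u i = 0) ∧
  (∀ i, ¬(0 < u i - γ * lam i ∧ u i - γ * lam i ≤ Real.sqrt (2 * γ * C)) →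
      u i = u i - γ * lam i)

open Filter Topology

theorem isLocalMin_finset_sum {α ι β : Type*} [TopologicalSpace α] [AddCommMonoid β]
    [PartialOrder β] [IsOrderedAddMonoid β] {s : Finset ι} {f : ι → α → β} {a : α}
    (h : ∀ i ∈ s, IsLocalMin (f i) a) : IsLocalMin (fun x => ∑ i ∈ s, f i x) a := by
  filter_upwards [(eventually_all_finset s).2 h] with x hx using sum_le_sum hx

theorem isLocalMin_half_sq_sub_mul (a : ℝ) : IsLocalMin (fun v : ℝ => v ^ 2 / 2 - a * v) a :=
  Eventually.of_forall fun v => by nlinarith [sq_nonneg (v - a)]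

theorem isLocalMin_ite_pos {C : ℝ} (hC : 0 ≤ C) (a : ℝ) :
    IsLocalMin (fun v : ℝ => if 0 < v then C else 0) a := by
  by_cases ha : 0 < a
  · filter_upwards [Ioi_mem_nhds ha] with v hv
    simp [ha, Set.mem_Ioi.mp hv]
  · refine Eventually.of_forall fun v => ?_
    simp only [ha, if_false]
    split_ifs <;> simp [hC]

theorem isLocalMin_ite_pos_add_mul_zero {C c : ℝ} (hC : 0 < C) (hc : c ≤ 0) :
    IsLocalMin (fun v : ℝ => (if 0 < v then C else 0) + c * v) 0 := by
  have hr : 0 < C / (1 - c) := div_pos hC (by linarith)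
  filter_upwards [Iio_mem_nhds hr] with v hv
  have hv' : (1 - c) * v < C := (lt_div_iff₀' (by linarith)).mp hv
  simp only [lt_irrefl, if_false, mul_zero, add_zero]
  split_ifs <;> nlinarith

/-- `hzero` and `hfix` are condition (d) at one index, with multiplier `c` and threshold `τ`. -/
theorem isLocalMin_ite_pos_add_mul_of_prox {C γ τ u c : ℝ} (hC : 0 < C) (hγ : 0 < γ)
    (hzero : 0 < u - γ * c ∧ u - γ * c ≤ τ → u = 0)
    (hfix : ¬(0 < u - γ * c ∧ u - γ * c ≤ τ) → u = u - γ * c) :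
    IsLocalMin (fun v : ℝ => (if 0 < v then C else 0) + c * v) u := by
  by_cases h : 0 < u - γ * c ∧ u - γ * c ≤ τ
  · obtain rfl := hzero h
    exact isLocalMin_ite_pos_add_mul_zero hC (by nlinarith [h.1])
  · have hc : c = 0 := (mul_eq_zero.mp (by linarith [hfix h])).resolve_left hγ.ne'
    subst hc
    simpa using isLocalMin_ite_pos hC.le u

theorem sum_mul_eq_of_feasible {m n : ℕ} {A : Matrix (Fin m) (Fin n) ℝ} {y lam : Fin m → ℝ}
    {w₀ w : Fin n → ℝ} {b : ℝ} {u : Fin m → ℝ} (hw₀ : ∀ j, w₀ j + ∑ i, A i j * lam i = 0)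
    (hy : ∑ i, y i * lam i = 0) (hfeas : ∀ i, u i + A.mulVec w i + b * y i = 1) :
    ∑ i, lam i * u i = ∑ i, lam i + ∑ j, w₀ j * w j := by
  have hAw : lam ⬝ᵥ A.mulVec w = -∑ j, w₀ j * w j := by
    rw [Matrix.dotProduct_mulVec, dotProduct, ← sum_neg_distrib]
    refine sum_congr rfl fun j _ => ?_
    rw [Matrix.vecMul, dotProduct, eq_neg_of_add_eq_zero_left (hw₀ j)]
    simp only [mul_comm (lam _), neg_mul, neg_neg]
  calc ∑ i, lam i * u i = ∑ i, lam i - lam ⬝ᵥ A.mulVec w - b * ∑ i, y i * lam i := by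
        simp only [dotProduct, mul_sum, ← sum_sub_distrib]
        refine sum_congr rfl fun i _ => ?_
        linear_combination lam i * hfeas i
    _ = ∑ i, lam i + ∑ j, w₀ j * w j := by rw [hAw, hy]; ring

theorem mul_l01norm_eq_sum_ite {m : ℕ} (C : ℝ) (v : Fin m → ℝ) :
    C * (l01norm v : ℝ) = ∑ i, if 0 < v i then C else 0 := by
  rw [l01norm, ← sum_filter, sum_const, nsmul_eq_mul, mul_comm]

theorem PStationary_is_local_min_general {m n : ℕ}
    (y : Fin m → ℝ)
    (A : Matrix (Fin m) (Fin n) ℝ)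
    (C : ℝ) (hC : 0 < C) (γ : ℝ) (hγ : 0 < γ)
    (wstar : Fin n → ℝ) (bstar : ℝ) (ustar : Fin m → ℝ) (lam : Fin m → ℝ)
    (hstat : IsPStationary A y C γ wstar bstar ustar lam) :
    IsLocalMinOn
      (fun p : (Fin n → ℝ) × ℝ × (Fin m → ℝ) =>
        (1 / 2) * (∑ j, (p.1 j) ^ 2) + C * (l01norm p.2.2 : ℝ))
      {p : (Fin n → ℝ) × ℝ × (Fin m → ℝ) |
        ∀ i, p.2.2 i + A.mulVec p.1 i + p.2.1 * y i = 1}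
      (wstar, bstar, ustar) := by
  obtain ⟨hdual, hy, hfeas, hzero, hfix⟩ := hstat
  set L : (Fin n → ℝ) × ℝ × (Fin m → ℝ) → ℝ := fun p =>
    (∑ j, ((p.1 j) ^ 2 / 2 - wstar j * p.1 j)) +
      ∑ i, ((if 0 < p.2.2 i then C else 0) + lam i * p.2.2 i)
  have hw : ∀ j, IsLocalMin (fun p : (Fin n → ℝ) × ℝ × (Fin m → ℝ) =>
      (p.1 j) ^ 2 / 2 - wstar j * p.1 j) (wstar, bstar, ustar) := fun j =>
    (isLocalMin_half_sq_sub_mul (wstar j)).comp_continuous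
      (g := fun p : (Fin n → ℝ) × ℝ × (Fin m → ℝ) => p.1 j) (b := (wstar, bstar, ustar))
      (by fun_prop)
  have hu : ∀ i, IsLocalMin (fun p : (Fin n → ℝ) × ℝ × (Fin m → ℝ) =>
      (if 0 < p.2.2 i then C else 0) + lam i * p.2.2 i) (wstar, bstar, ustar) := fun i =>
    (isLocalMin_ite_pos_add_mul_of_prox hC hγ (hzero i) (hfix i)).comp_continuous
      (g := fun p : (Fin n → ℝ) × ℝ × (Fin m → ℝ) => p.2.2 i) (b := (wstar, bstar, ustar))
      (by fun_prop)
  have hL : IsLocalMin L (wstar, bstar, ustar) :=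
    (isLocalMin_finset_sum fun j _ => hw j).add (isLocalMin_finset_sum fun i _ => hu i)
  refine ((hL.sub (isLocalMax_const (b := ∑ i, lam i))).on _).congr
    (eventuallyEq_nhdsWithin_of_eqOn fun p hp => ?_) hfeas
  have := sum_mul_eq_of_feasible hdual hy hp
  simp only [L, mul_l01norm_eq_sum_ite, sum_add_distrib, sum_sub_distrib, ← sum_div, this]
  ring

/-- any P-stationary point (with some parameter `γ > 0`) of the
`L_{0/1}`-SVM problem is a local minimizer of that constrained problem. -/
theorem PStationary_is_local_min {m n : ℕ}
    (x : Fin m → Fin n → ℝ) (y : Fin m → ℝ) (hy : ∀ i, y i = 1 ∨ y i = -1)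
    (A : Matrix (Fin m) (Fin n) ℝ) (hA : ∀ i j, A i j = y i * x i j)
    (C : ℝ) (hC : 0 < C) (γ : ℝ) (hγ : 0 < γ)
    (wstar : Fin n → ℝ) (bstar : ℝ) (ustar : Fin m → ℝ) (lam : Fin m → ℝ)
    (hstat : IsPStationary A y C γ wstar bstar ustar lam) :
    IsLocalMinOn
      (fun p : (Fin n → ℝ) × ℝ × (Fin m → ℝ) =>
        (1 / 2) * (∑ j, (p.1 j) ^ 2) + C * (l01norm p.2.2 : ℝ))
      {p : (Fin n → ℝ) × ℝ × (Fin m → ℝ) |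
        ∀ i, p.2.2 i + A.mulVec p.1 i + p.2.1 * y i = 1}
      (wstar, bstar, ustar) :=
  PStationary_is_local_min_general y A C hC γ hγ wstar bstar ustar lam hstat
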